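/- (Lemma 4 of the paper.) Let ≈ be an SCER on strings over Σ, f a prefix encoding with respect to ≈, and D a dictionary. For every P_k ∈ D, every 1 ≤ j ≤ |P_k|, and every pattern P ∈ Out(f(P_k)[:j]), there exists q ≥ 0 such that f(P) = Fail^q(f(P_k)[:j]). -/

import Mathlib

/-! For `1 ≤ l ≤ j` call `l` live if `f(P_k[l:j]) ∈ Pref(f(D))`; `l = 1` is live, with state
`f(P_k)[:j]`. If `i' < i` are consecutive live indices, then `Fail` maps the state of `i'` to the
state of `i`: writing `f(P_k[i':j]) = f(P'[:m])` with `P' ∈ D`, substring consistency gives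
`f(P'[l:m]) = f(P_k[i'+l-1:j])`, so the minimum defining `Fail(f(P')[:m])` is attained at
`l = i - i' + 1`. Hence every live index is reached from `1` by iterating `Fail`, and a pattern
`P ≈ P_k[i:j]` in `D` makes `i` live with `f(P)` as its state. -/

/-- The substring `X[i:j]` (1-indexed, inclusive; `ε` when `j < i`). -/
def seg {σ : Type*} (X : List σ) (i j : ℕ) : List σ := (X.take j).drop (i - 1)

/-- `Pref(f(D))`: the set of all prefixes (including `ε`) of the encoded
patterns; these are the states of the SCER automaton of `D`. -/
def PrefSet {σ π : Type*} (f : List σ → List π) (D : Finset (List σ)) :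
    Set (List π) :=
  {S | ∃ P ∈ D, S <+: f P}

/-- The index `i = min {l | 1 < l ≤ j + 1, f(P[l:j]) ∈ Pref(f(D))}` used in the
definition of the failure function. -/
noncomputable def failIdx {σ π : Type*} (f : List σ → List π)
    (D : Finset (List σ)) (P : List σ) (j : ℕ) : ℕ :=
  sInf {l | 1 < l ∧ l ≤ j + 1 ∧ f (seg P l j) ∈ PrefSet f D}

section Seg

variable {σ : Type*}

lemma seg_one (X : List σ) (j : ℕ) : seg X 1 j = X.take j := by
  simp [seg]

lemma seg_take (X : List σ) (l m : ℕ) : seg (X.take m) l m = seg X l m := by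
  simp [seg, List.take_take]

lemma length_seg (X : List σ) (i j : ℕ) (hj : j ≤ X.length) :
    (seg X i j).length = j - (i - 1) := by
  simp [seg]; omega

lemma seg_eq_nil_of_lt (X : List σ) {l m : ℕ} (h : m < l) : seg X l m = [] := by
  simp only [seg, List.drop_eq_nil_iff, List.length_take]
  omega

lemma seg_seg (X : List σ) {i l : ℕ} (j : ℕ) (hi : 1 ≤ i) (hl : 1 ≤ l) :
    seg (seg X i j) l (j - i + 1) = seg X (i + l - 1) j := by
  unfold seg
  rw [List.take_of_length_le, List.drop_drop]
  · congr 1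
    omega
  · simp only [List.length_drop, List.length_take]
    omega

end Seg

section FailureChain

variable {σ π : Type*} {f : List σ → List π}

lemma encode_seg_eq_of_encode_eq {R : List σ → List σ → Prop}
    (hsub : ∀ X Y, R X Y → ∀ i j, 1 ≤ i → i ≤ j → j ≤ X.length →
      R (seg X i j) (seg Y i j))
    (hf3 : ∀ X Y, f X = f Y ↔ R X Y)
    {X Y : List σ} (h : f X = f Y) {l m : ℕ} (hl : 1 ≤ l) (hm : m ≤ X.length) :
    f (seg X l m) = f (seg Y l m) := by
  rcases le_or_gt l m with hlm | hml
  · exact (hf3 _ _).2 (hsub X Y ((hf3 X Y).1 h) l m hl hlm hm)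
  · rw [seg_eq_nil_of_lt X hml, seg_eq_nil_of_lt Y hml]

lemma fail_encode_seg {R : List σ → List σ → Prop}
    (hsub : ∀ X Y, R X Y → ∀ i j, 1 ≤ i → i ≤ j → j ≤ X.length →
      R (seg X i j) (seg Y i j))
    (hf1 : ∀ X, (f X).length = X.length)
    (hf2 : ∀ (X : List σ) (i : ℕ), 1 ≤ i → i ≤ X.length →
      f (X.take i) = (f X).take i)
    (hf3 : ∀ X Y, f X = f Y ↔ R X Y)
    {D : Finset (List σ)} {Fail : List π → List π}
    (hFail : ∀ P ∈ D, ∀ j : ℕ, 1 ≤ j → j ≤ P.length →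
      Fail ((f P).take j) = f (seg P (failIdx f D P j) j))
    {P_k : List σ} {i' i j : ℕ} (hi' : 1 ≤ i') (hi'i : i' < i) (hij : i ≤ j + 1)
    (hjP : j ≤ P_k.length)
    (hstate' : f (seg P_k i' j) ∈ PrefSet f D) (hstate : f (seg P_k i j) ∈ PrefSet f D)
    (hgap : ∀ l, i' < l → l < i → f (seg P_k l j) ∉ PrefSet f D) :
    Fail (f (seg P_k i' j)) = f (seg P_k i j) := by
  obtain ⟨P', hP'D, hpre⟩ := hstate'
  set m := j - i' + 1
  have hlen : (f (seg P_k i' j)).length = m := by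
    rw [hf1, length_seg _ _ _ hjP]; omega
  have hmP' : m ≤ P'.length := by
    simpa only [hlen, hf1] using hpre.length_le
  have hstate_eq : f (seg P_k i' j) = (f P').take m := by
    rw [List.prefix_iff_eq_take.mp hpre, hlen]
  have hcorr : ∀ l, 1 ≤ l → f (seg P' l m) = f (seg P_k (i' + l - 1) j) := by
    intro l hl
    rw [← seg_take, ← seg_seg P_k j hi' hl]
    exact encode_seg_eq_of_encode_eq hsub hf3
      ((hf2 P' m (by omega) hmP').trans hstate_eq.symm) hl (by simp [hmP'])
  have hidx : failIdx f D P' m = i - i' + 1 := by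
    refine IsLeast.csInf_eq ⟨⟨by omega, by omega, ?_⟩, ?_⟩
    · rw [hcorr _ (by omega)]
      convert hstate using 3
      omega
    · rintro l ⟨hl1, hlm, hl⟩
      by_contra! hlt
      exact hgap (i' + l - 1) (by omega) (by omega) (hcorr l (by omega) ▸ hl)
  rw [hstate_eq, hFail P' hP'D m (by omega) hmP', hidx, hcorr _ (by omega)]
  congr 2
  omega

lemma exists_iterate_fail_eq_encode_seg {R : List σ → List σ → Prop}
    (hsub : ∀ X Y, R X Y → ∀ i j, 1 ≤ i → i ≤ j → j ≤ X.length →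
      R (seg X i j) (seg Y i j))
    (hf1 : ∀ X, (f X).length = X.length)
    (hf2 : ∀ (X : List σ) (i : ℕ), 1 ≤ i → i ≤ X.length →
      f (X.take i) = (f X).take i)
    (hf3 : ∀ X Y, f X = f Y ↔ R X Y)
    {D : Finset (List σ)} {Fail : List π → List π}
    (hFail : ∀ P ∈ D, ∀ j : ℕ, 1 ≤ j → j ≤ P.length →
      Fail ((f P).take j) = f (seg P (failIdx f D P j) j))
    {P_k : List σ} (hPk : P_k ∈ D) {j : ℕ} (hjP : j ≤ P_k.length)
    (i : ℕ) (hi : 1 ≤ i) (hij : i ≤ j) (hstate : f (seg P_k i j) ∈ PrefSet f D) :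
    ∃ q : ℕ, f (seg P_k i j) = Fail^[q] ((f P_k).take j) := by
  induction i using Nat.strong_induction_on with
  | _ i ih =>
  classical
  have hroot : f (seg P_k 1 j) = (f P_k).take j := by
    rw [seg_one, hf2 P_k j (by omega) hjP]
  rcases hi.eq_or_lt with rfl | hi1
  · exact ⟨0, hroot⟩
  let IsState : ℕ → Prop := fun l ↦ f (seg P_k l j) ∈ PrefSet f D
  let i' := Nat.findGreatest IsState (i - 1)
  have hroot_state : IsState 1 := ⟨P_k, hPk, hroot ▸ List.take_prefix _ _⟩
  have hi' : 1 ≤ i' := Nat.le_findGreatest (by omega) hroot_state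
  have hi'i : i' < i := (Nat.findGreatest_le _).trans_lt (by omega)
  have hstate' : IsState i' := Nat.findGreatest_spec (by omega) hroot_state
  have hgap : ∀ l, i' < l → l < i → ¬IsState l :=
    fun l hl hli ↦ Nat.findGreatest_is_greatest hl (by omega)
  obtain ⟨q, hq⟩ := ih i' hi'i hi' (by omega) hstate'
  refine ⟨q + 1, ?_⟩
  rw [Function.iterate_succ_apply', ← hq,
    fail_encode_seg hsub hf1 hf2 hf3 hFail hi' hi'i (by omega) hjP hstate' hstate hgap]

end FailureChain

theorem out_in_fail_chain_general {σ π : Type*} (R : List σ → List σ → Prop)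
    (hsub : ∀ X Y, R X Y → ∀ i j, 1 ≤ i → i ≤ j → j ≤ X.length →
      R (seg X i j) (seg Y i j))
    (f : List σ → List π)
    (hf1 : ∀ X, (f X).length = X.length)
    (hf2 : ∀ (X : List σ) (i : ℕ), 1 ≤ i → i ≤ X.length →
      f (X.take i) = (f X).take i)
    (hf3 : ∀ X Y, f X = f Y ↔ R X Y)
    (D : Finset (List σ))
    (Fail : List π → List π)
    (hFail : ∀ P ∈ D, ∀ j : ℕ, 1 ≤ j → j ≤ P.length →
      Fail ((f P).take j) = f (seg P (failIdx f D P j) j))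
    (P_k : List σ) (hPk : P_k ∈ D) (j : ℕ)
    (hjP : j ≤ P_k.length)
    (P : List σ) (hPD : P ∈ D)
    (hout : ∃ i, 1 ≤ i ∧ i ≤ j ∧ R P (seg P_k i j)) :
    ∃ q : ℕ, f P = Fail^[q] ((f P_k).take j) := by
  obtain ⟨i, hi, hij, hRP⟩ := hout
  have hfP : f P = f (seg P_k i j) := (hf3 _ _).2 hRP
  obtain ⟨q, hq⟩ := exists_iterate_fail_eq_encode_seg hsub hf1 hf2 hf3 hFail hPk hjP i hi hij
    ⟨P, hPD, hfP ▸ List.prefix_refl _⟩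
  exact ⟨q, hfP.trans hq⟩

/-- Lemma 4.  Let `R` be an SCER, `f` a prefix encoding w.r.t. `R`, `D` a
dictionary and `Fail` the failure function of the SCER automaton.  For every
`P_k ∈ D`, every `1 ≤ j ≤ |P_k|` and every pattern
`P ∈ Out(f(P_k)[:j]) = {P ∈ D | P ≈ P_k[i:j] for some 1 ≤ i ≤ j}`, there
exists `q ≥ 0` such that `f(P) = Fail^q(f(P_k)[:j])`. -/
theorem out_in_fail_chain {σ π : Type*} (R : List σ → List σ → Prop)
    (hequiv : Equivalence R)
    (hlen : ∀ X Y, R X Y → X.length = Y.length)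
    (hsub : ∀ X Y, R X Y → ∀ i j, 1 ≤ i → i ≤ j → j ≤ X.length →
      R (seg X i j) (seg Y i j))
    (f : List σ → List π)
    (hf1 : ∀ X, (f X).length = X.length)
    (hf2 : ∀ (X : List σ) (i : ℕ), 1 ≤ i → i ≤ X.length →
      f (X.take i) = (f X).take i)
    (hf3 : ∀ X Y, f X = f Y ↔ R X Y)
    (D : Finset (List σ))
    (Fail : List π → List π)
    (hFail : ∀ P ∈ D, ∀ j : ℕ, 1 ≤ j → j ≤ P.length →
      Fail ((f P).take j) = f (seg P (failIdx f D P j) j))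
    (P_k : List σ) (hPk : P_k ∈ D) (j : ℕ)
    (hj : 1 ≤ j) (hjP : j ≤ P_k.length)
    (P : List σ) (hPD : P ∈ D)
    (hout : ∃ i, 1 ≤ i ∧ i ≤ j ∧ R P (seg P_k i j)) :
    ∃ q : ℕ, f P = Fail^[q] ((f P_k).take j) :=
  out_in_fail_chain_general R hsub f hf1 hf2 hf3 D Fail hFail P_k hPk j hjP P hPD hout
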